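/- arXiv:2602.11493 — 4 statements merged into one kernel-verified Lean document; each statement's English description precedes it below -/
import Mathlib

section
/- Let A ∈ ℍ^{n₁×r×n₃} and B ∈ ℍ^{r×n₂×n₃} be third-order quaternion tensors. Then bcirc_z(A *_Q B) = bcirc_z(A) · bcirc_z(B). Consequently, for any C ∈ ℍ^{n₁×n₂×n₃}, one has A *_Q B = C if and only if bcirc_z(A) · bcirc_z(B) = bcirc_z(C). -/
open Matrix Kronecker

noncomputable section

/-- The real quaternions. -/
abbrev Quat := Quaternion ℝ

/-- The embedding of `ℂ` into the quaternions (via `1` and `i`). -/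
def c2q (z : ℂ) : Quat := ⟨z.re, z.im, 0, 0⟩

/-- The quaternion imaginary unit `j`. -/
def jH : Quat := ⟨0, 0, 1, 0⟩

/-- The first complex component of a quaternion: `q = c2q (qd q) + jH * c2q (qc q)`. -/
def qd (q : Quat) : ℂ := ⟨q.re, q.imI⟩

/-- The second complex component of a quaternion. -/
def qc (q : Quat) : ℂ := ⟨q.imJ, -q.imK⟩

/-- A third-order tensor, given by its family of frontal slices. -/
abbrev Tensor (α : Type*) (n₁ n₂ n₃ : ℕ) := Fin n₃ → Matrix (Fin n₁) (Fin n₂) α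

/-- The complex tensor `A_d` in the decomposition `A = A_d + j·A_c`. -/
def Td {n₁ n₂ n₃ : ℕ} (A : Tensor Quat n₁ n₂ n₃) : Tensor ℂ n₁ n₂ n₃ :=
  fun k i j => qd (A k i j)

/-- The complex tensor `A_c` in the decomposition `A = A_d + j·A_c`. -/
def Tc {n₁ n₂ n₃ : ℕ} (A : Tensor Quat n₁ n₂ n₃) : Tensor ℂ n₁ n₂ n₃ :=
  fun k i j => qc (A k i j)

/-- The normalized `n × n` DFT matrix (0-indexed). -/
def Fmat (n : ℕ) : Matrix (Fin n) (Fin n) ℂ :=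
  fun s t => (((Real.sqrt (n : ℝ)) : ℂ))⁻¹ *
    Complex.exp ((-2 * (Real.pi : ℂ) * Complex.I * ((s : ℕ) : ℂ) * ((t : ℕ) : ℂ)) / (n : ℂ))

/-- The flip permutation matrix `P_n` (0-indexed: `P_{s,t} = 1` iff `s + t ≡ 0 (mod n)`). -/
def Pmat (n : ℕ) : Matrix (Fin n) (Fin n) ℂ :=
  fun s t => if ((s : ℕ) + (t : ℕ)) % n = 0 then 1 else 0

/-- Left scalar multiplication of a quaternion matrix by a quaternion. -/
def lsmul {m n : Type*} (q : Quat) (M : Matrix m n Quat) : Matrix m n Quat :=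
  fun i j => q * M i j

/-- Right scalar multiplication of a quaternion matrix by a quaternion. -/
def rsmul {m n : Type*} (q : Quat) (M : Matrix m n Quat) : Matrix m n Quat :=
  fun i j => M i j * q

/-- The block circulant matrix of a third-order tensor. -/
def bcirc {α : Type*} {n₁ n₂ n₃ : ℕ} (T : Tensor α n₁ n₂ n₃) :
    Matrix (Fin n₃ × Fin n₁) (Fin n₃ × Fin n₂) α :=
  fun p q => T (p.1 - q.1) p.2 q.2

/-- The z-block circulant matrix `bcirc_z(A) = bcirc(A_d) + j·bcirc(A_c)·(P_{n₃} ⊗ I_{n₂})`. -/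
def bcircz {n₁ n₂ n₃ : ℕ} (A : Tensor Quat n₁ n₂ n₃) :
    Matrix (Fin n₃ × Fin n₁) (Fin n₃ × Fin n₂) Quat :=
  (bcirc (Td A)).map c2q +
    lsmul jH ((bcirc (Tc A) * (Pmat n₃ ⊗ₖ (1 : Matrix (Fin n₂) (Fin n₂) ℂ))).map c2q)

/-- `unfold`: stack the frontal slices vertically. -/
def unfoldT {α : Type*} {n₁ n₂ n₃ : ℕ} (T : Tensor α n₁ n₂ n₃) :
    Matrix (Fin n₃ × Fin n₁) (Fin n₂) α :=
  fun p j => T p.1 p.2 j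

/-- `fold`: the inverse of `unfold`. -/
def foldT {α : Type*} {n₁ n₂ n₃ : ℕ} (M : Matrix (Fin n₃ × Fin n₁) (Fin n₂) α) :
    Tensor α n₁ n₂ n₃ :=
  fun k i j => M (k, i) j

/-- The QT-product `A *_Q B = fold(bcirc_z(A)·unfold(B))`. -/
def qtmul {n₁ r n₂ n₃ : ℕ} (A : Tensor Quat n₁ r n₃) (B : Tensor Quat r n₂ n₃) :
    Tensor Quat n₁ n₂ n₃ :=
  foldT (bcircz A * unfoldT B)

/-- The mode-3 quaternion DFT
`Â(i,j,:) = √n₃·F_{n₃}·A_d(i,j,:) + j·√n₃·P_{n₃}·F_{n₃}·A_c(i,j,:)`, tube-wise. -/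
def hatT {n₁ n₂ n₃ : ℕ} (A : Tensor Quat n₁ n₂ n₃) : Tensor Quat n₁ n₂ n₃ :=
  fun k i j =>
    c2q (((Real.sqrt (n₃ : ℝ)) : ℂ) * ∑ t, Fmat n₃ k t * Td A t i j) +
    jH * c2q (((Real.sqrt (n₃ : ℝ)) : ℂ) * ∑ t, (Pmat n₃ * Fmat n₃) k t * Tc A t i j)

/-- `diag(Â)`: the block diagonal matrix with the frontal slices as diagonal blocks. -/
def blkDiag {α : Type*} [Zero α] {n₁ n₂ n₃ : ℕ} (T : Tensor α n₁ n₂ n₃) :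
    Matrix (Fin n₃ × Fin n₁) (Fin n₃ × Fin n₂) α :=
  fun p q => if p.1 = q.1 then T p.1 p.2 q.2 else 0

/-- Conjugate transpose of a complex tensor: conjugate-transpose each slice and
reverse the order of slices `2,…,n₃` (i.e. slice `k ↦ -k` in 0-indexing). -/
def cConjT {n₁ n₂ n₃ : ℕ} (T : Tensor ℂ n₁ n₂ n₃) : Tensor ℂ n₂ n₁ n₃ :=
  fun k => (T (-k))ᴴ

/-- Conjugate transpose of a quaternion tensor, defined by
`unfold(A*) = unfold(A_d*) − (P_{n₃} ⊗ I_{n₂})·unfold(A_c*)·j`. -/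
def tConjT {n₁ n₂ n₃ : ℕ} (A : Tensor Quat n₁ n₂ n₃) : Tensor Quat n₂ n₁ n₃ :=
  foldT ((unfoldT (cConjT (Td A))).map c2q -
    rsmul jH (((Pmat n₃ ⊗ₖ (1 : Matrix (Fin n₂) (Fin n₂) ℂ)) *
      unfoldT (cConjT (Tc A))).map c2q))

/-- The identity tensor: identity matrix as first frontal slice, zero elsewhere. -/
def idT (n n₃ : ℕ) : Tensor Quat n n n₃ :=
  fun k => if (k : ℕ) = 0 then (1 : Matrix (Fin n) (Fin n) Quat) else 0

/-- A quaternion tensor is unitary if `U* *_Q U = U *_Q U* = I`. -/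
def IsUnitaryT {n n₃ : ℕ} (U : Tensor Quat n n n₃) : Prop :=
  qtmul (tConjT U) U = idT n n₃ ∧ qtmul U (tConjT U) = idT n n₃

/-- A quaternion tensor is Hermitian if `H* = H`. -/
def IsHermitianT {n n₃ : ℕ} (H : Tensor Quat n n n₃) : Prop := tConjT H = H

/-- A quaternion matrix `M` is positive semidefinite if `x*·M·x` is a nonnegative
real number for every quaternion vector `x`. -/
def IsPSDMat {m : Type*} [Fintype m] (M : Matrix m m Quat) : Prop :=
  ∀ x : m → Quat, ∃ r : ℝ, 0 ≤ r ∧ (star x) ⬝ᵥ M.mulVec x = (r : Quat)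

/-! Auxiliary lemmas -/

def mk2 (z w : ℂ) : Quat := c2q z + jH * c2q w

@[simp] lemma c2q_re (z : ℂ) : (c2q z).re = z.re := rfl
@[simp] lemma c2q_imI (z : ℂ) : (c2q z).imI = z.im := rfl
@[simp] lemma c2q_imJ (z : ℂ) : (c2q z).imJ = 0 := rfl
@[simp] lemma c2q_imK (z : ℂ) : (c2q z).imK = 0 := rfl
@[simp] lemma jH_re : jH.re = 0 := rfl
@[simp] lemma jH_imI : jH.imI = 0 := rfl
@[simp] lemma jH_imJ : jH.imJ = 1 := rfl
@[simp] lemma jH_imK : jH.imK = 0 := rfl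

lemma mk2_eta (q : Quat) : mk2 (qd q) (qc q) = q := by
  simp [mk2, qd, qc, Quaternion.ext_iff]

lemma qd_mk2 (z w : ℂ) : qd (mk2 z w) = z := by
  simp [mk2, qd, Complex.ext_iff]

lemma qc_mk2 (z w : ℂ) : qc (mk2 z w) = w := by
  simp [mk2, qc, Complex.ext_iff]

lemma mk2_mul (z w z' w' : ℂ) :
    mk2 z w * mk2 z' w' =
      mk2 (z * z' - (starRingEnd ℂ) w * w') ((starRingEnd ℂ) z * w' + w * z') := by
  simp only [mk2, c2q_re, c2q_imI, c2q_imJ, c2q_imK, jH_re, jH_imI, jH_imJ, jH_imK,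
    Quaternion.ext_iff, Complex.ext_iff, Quaternion.re_add,
    Quaternion.imI_add, Quaternion.imJ_add, Quaternion.imK_add, Quaternion.re_mul,
    Quaternion.imI_mul, Quaternion.imJ_mul, Quaternion.imK_mul, Complex.add_re,
    Complex.add_im, Complex.sub_re, Complex.sub_im, Complex.mul_re, Complex.mul_im,
    Complex.conj_re, Complex.conj_im]
  refine ⟨by ring, by ring, by ring, by ring⟩

lemma quat_mul_mk2 (a b : Quat) :
    a * b = mk2 (qd a * qd b - (starRingEnd ℂ) (qc a) * qc b)
      ((starRingEnd ℂ) (qd a) * qc b + qc a * qd b) := by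
  conv_lhs => rw [← mk2_eta a, ← mk2_eta b]
  rw [mk2_mul]

lemma mk2_add (z w z' w' : ℂ) : mk2 z w + mk2 z' w' = mk2 (z + z') (w + w') := by
  simp [mk2, Quaternion.ext_iff]; ring_nf

lemma mk2_zero : mk2 0 0 = 0 := by simp [mk2, Quaternion.ext_iff]; exact ⟨rfl, rfl, rfl, rfl⟩

lemma mk2_sum {ι : Type*} (s : Finset ι) (f g : ι → ℂ) :
    ∑ x ∈ s, mk2 (f x) (g x) = mk2 (∑ x ∈ s, f x) (∑ x ∈ s, g x) := by
  classical
  induction s using Finset.induction_on with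
  | empty => simp [mk2_zero]
  | insert _ _ h ih => rw [Finset.sum_insert h, Finset.sum_insert h, Finset.sum_insert h, ih, mk2_add]

lemma pmat_apply {n : ℕ} [NeZero n] (u t : Fin n) :
    Pmat n u t = if u = -t then 1 else 0 := by
  have h : ((u : ℕ) + (t : ℕ)) % n = 0 ↔ u = -t := by
    rw [eq_neg_iff_add_eq_zero, Fin.ext_iff, Fin.add_def]
    simp
  simp [Pmat, h]

lemma bcirc_mul_pk {n₂ n₃ m : ℕ} (T : Tensor ℂ m n₂ n₃) (s t : Fin n₃) (i : Fin m) (j : Fin n₂) :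
    (bcirc T * (Pmat n₃ ⊗ₖ (1 : Matrix (Fin n₂) (Fin n₂) ℂ))) (s, i) (t, j) = T (s + t) i j := by
  haveI : NeZero n₃ := ⟨s.pos.ne'⟩
  rw [Matrix.mul_apply, Fintype.sum_prod_type]
  simp [bcirc, Matrix.kroneckerMap_apply, Matrix.one_apply, pmat_apply, mul_ite, ite_mul,
    Finset.sum_ite_eq', sub_neg_eq_add]

lemma bcircz_apply {n₁ n₂ n₃ : ℕ} (A : Tensor Quat n₁ n₂ n₃) (s t : Fin n₃) (i : Fin n₁)
    (j : Fin n₂) :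
    bcircz A (s, i) (t, j) = mk2 (qd (A (s - t) i j)) (qc (A (s + t) i j)) := by
  rw [bcircz]
  simp only [Matrix.add_apply, Matrix.map_apply, lsmul, bcirc_mul_pk]
  rfl

lemma qtmul_apply {n₁ r n₂ n₃ : ℕ} (A : Tensor Quat n₁ r n₃) (B : Tensor Quat r n₂ n₃)
    (k : Fin n₃) (i : Fin n₁) (j : Fin n₂) :
    qtmul A B k i j =
      mk2 (∑ u : Fin n₃, ∑ l : Fin r,
            (qd (A (k - u) i l) * qd (B u l j) -
              (starRingEnd ℂ) (qc (A (k + u) i l)) * qc (B u l j)))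
          (∑ u : Fin n₃, ∑ l : Fin r,
            ((starRingEnd ℂ) (qd (A (k - u) i l)) * qc (B u l j) +
              qc (A (k + u) i l) * qd (B u l j))) := by
  show (bcircz A * unfoldT B) (k, i) j = _
  rw [Matrix.mul_apply, Fintype.sum_prod_type]
  have hterm : ∀ (u : Fin n₃) (l : Fin r),
      bcircz A (k, i) (u, l) * unfoldT B (u, l) j =
        mk2 (qd (A (k - u) i l) * qd (B u l j) -
              (starRingEnd ℂ) (qc (A (k + u) i l)) * qc (B u l j))
            ((starRingEnd ℂ) (qd (A (k - u) i l)) * qc (B u l j) +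
              qc (A (k + u) i l) * qd (B u l j)) := by
    intro u l
    rw [show unfoldT B (u, l) j = B u l j from rfl, bcircz_apply, quat_mul_mk2, qd_mk2, qc_mk2]
  simp only [hterm, mk2_sum]

lemma bcircz_qtmul {n₁ r n₂ n₃ : ℕ} (A : Tensor Quat n₁ r n₃) (B : Tensor Quat r n₂ n₃) :
    bcircz (qtmul A B) = bcircz A * bcircz B := by
  refine Matrix.ext fun p q => ?_
  obtain ⟨s, i⟩ := p
  obtain ⟨t, j⟩ := q
  haveI : NeZero n₃ := ⟨s.pos.ne'⟩
  have hterm : ∀ (u : Fin n₃) (l : Fin r),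
      bcircz A (s, i) (u, l) * bcircz B (u, l) (t, j) =
        mk2 (qd (A (s - u) i l) * qd (B (u - t) l j) -
              (starRingEnd ℂ) (qc (A (s + u) i l)) * qc (B (u + t) l j))
            ((starRingEnd ℂ) (qd (A (s - u) i l)) * qc (B (u + t) l j) +
              qc (A (s + u) i l) * qd (B (u - t) l j)) := by
    intro u l
    rw [bcircz_apply, bcircz_apply, mk2_mul]
  rw [bcircz_apply, qtmul_apply, qtmul_apply, qd_mk2, qc_mk2, Matrix.mul_apply,
    Fintype.sum_prod_type]
  simp only [hterm, mk2_sum]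
  refine congrArg₂ mk2 ?_ ?_
  · simp only [Finset.sum_sub_distrib]
    refine congrArg₂ (· - ·) ?_ ?_
    · refine Fintype.sum_equiv (Equiv.addRight t) _ _ fun u => ?_
      have h1 : Equiv.addRight t u - t = u := by simp
      have h2 : s - t - u = s - Equiv.addRight t u := by
        simp only [Equiv.coe_addRight]
        rw [sub_sub, add_comm]
      rw [h1, ← h2]
    · refine Fintype.sum_equiv (Equiv.subRight t) _ _ fun u => ?_
      have h1 : Equiv.subRight t u + t = u := by simp
      have h2 : s - t + u = s + Equiv.subRight t u := by
        simp only [Equiv.subRight_apply]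
        abel
      rw [h1, ← h2]
  · simp only [Finset.sum_add_distrib]
    refine congrArg₂ (· + ·) ?_ ?_
    · refine Fintype.sum_equiv (Equiv.subRight t) _ _ fun u => ?_
      have h1 : Equiv.subRight t u + t = u := by simp
      have h2 : s + t - u = s - Equiv.subRight t u := by
        simp only [Equiv.subRight_apply]
        abel
      rw [h1, ← h2]
    · refine Fintype.sum_equiv (Equiv.addRight t) _ _ fun u => ?_
      have h1 : Equiv.addRight t u - t = u := by simp
      have h2 : s + t + u = s + Equiv.addRight t u := by
        simp only [Equiv.coe_addRight]
        abel
      rw [h1, ← h2]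

lemma bcircz_inj {n₁ n₂ n₃ : ℕ} {X Y : Tensor Quat n₁ n₂ n₃} (h : bcircz X = bcircz Y) :
    X = Y := by
  funext k
  refine Matrix.ext fun i j => ?_
  haveI : NeZero n₃ := ⟨k.pos.ne'⟩
  have h2 := congrFun (congrFun h (k, i)) ((0 : Fin n₃), j)
  rw [bcircz_apply, bcircz_apply, sub_zero, add_zero] at h2
  have hd := congrArg qd h2
  have hc := congrArg qc h2
  rw [qd_mk2, qd_mk2] at hd
  rw [qc_mk2, qc_mk2] at hc
  rw [← mk2_eta (X k i j), hd, hc, mk2_eta]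

/-- `bcirc_z(A *_Q B) = bcirc_z(A)·bcirc_z(B)`, and consequently
`A *_Q B = C ↔ bcirc_z(A)·bcirc_z(B) = bcirc_z(C)`. -/
theorem stmt1 {n₁ r n₂ n₃ : ℕ} (A : Tensor Quat n₁ r n₃) (B : Tensor Quat r n₂ n₃) :
    bcircz (qtmul A B) = bcircz A * bcircz B ∧
    ∀ C : Tensor Quat n₁ n₂ n₃, qtmul A B = C ↔ bcircz A * bcircz B = bcircz C := by
  refine ⟨bcircz_qtmul A B, fun C => ⟨fun h => by rw [← h, bcircz_qtmul], fun h => ?_⟩⟩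
  exact bcircz_inj (by rw [bcircz_qtmul, h])

end
end

section
/- Let A ∈ ℍ^{n×n×n₃} be a third-order quaternion tensor and let A* denote its conjugate transpose. Then bcirc_z(A*) = (bcirc_z(A))*, where on the right-hand side * denotes the conjugate transpose of a quaternion matrix. -/
open Matrix Kronecker

noncomputable section

lemma mod_iff_aux (n s t : ℕ) (hs : s < n) (ht : t < n) :
    (s + t) % n = 0 ↔ s = (n - t) % n := by
  rcases Nat.eq_zero_or_pos t with h | h
  · subst h; simp [Nat.mod_eq_of_lt hs]
  · rw [Nat.mod_eq_of_lt (by omega : n - t < n)]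
    constructor
    · intro hmod
      rcases Nat.lt_or_ge (s+t) n with h2 | h2
      · rw [Nat.mod_eq_of_lt h2] at hmod; omega
      · have : (s+t) % n = s + t - n := by
          rw [Nat.mod_eq_sub_mod h2, Nat.mod_eq_of_lt (by omega)]
        omega
    · intro h2
      have : s + t = n := by omega
      simp [this]

lemma Pmat_apply' {n : ℕ} (s t : Fin n) : Pmat n s t = if s = -t then 1 else 0 := by
  have h : ((s : ℕ) + (t : ℕ)) % n = 0 ↔ s = -t := by
    rw [Fin.ext_iff, Fin.neg_def]
    exact mod_iff_aux n s t s.isLt t.isLt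
  simp only [Pmat, h]

lemma qd_aux (z w : ℂ) : qd (c2q z - c2q w * jH) = z := by
  apply Complex.ext <;>
    simp [qd, Quaternion.re_mul, Quaternion.imI_mul] <;> simp [c2q, jH]

lemma qc_aux (z w : ℂ) : qc (c2q z - c2q w * jH) = -(starRingEnd ℂ w) := by
  apply Complex.ext <;>
    simp [qc, Quaternion.imJ_mul, Quaternion.imK_mul] <;> simp [c2q, jH]

lemma star_c2q (z : ℂ) : star (c2q z) = c2q (starRingEnd ℂ z) := by
  ext <;> simp <;> simp [c2q]

lemma star_jH_mul (w : ℂ) : star (jH * c2q w) = -(jH * c2q w) := by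
  ext <;> simp [Quaternion.re_mul, Quaternion.imI_mul,
    Quaternion.imJ_mul, Quaternion.imK_mul] <;> simp [c2q, jH]

lemma c2q_neg (z : ℂ) : c2q (-z) = - c2q z := by ext <;> simp <;> simp [c2q]

lemma mulP_apply {n₁ n₂ n₃ : ℕ} (T : Tensor ℂ n₁ n₂ n₃)
    (p : Fin n₃ × Fin n₁) (q : Fin n₃ × Fin n₂) :
    (bcirc T * (Pmat n₃ ⊗ₖ (1 : Matrix (Fin n₂) (Fin n₂) ℂ))) p q
      = T (p.1 + q.1) p.2 q.2 := by
  rw [Matrix.mul_apply]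
  simp only [Fintype.sum_prod_type, kroneckerMap_apply, Pmat_apply', Matrix.one_apply,
    bcirc, mul_ite, mul_one, mul_zero, ite_mul, zero_mul]
  haveI : NeZero n₃ := ⟨p.1.pos.ne'⟩
  simp [Finset.sum_ite_eq, Finset.sum_ite_eq', sub_neg_eq_add]

lemma PmulUnfold_apply {n₁ n₂ n₃ : ℕ} (T : Tensor ℂ n₁ n₂ n₃)
    (k : Fin n₃) (i : Fin n₂) (j : Fin n₁) :
    ((Pmat n₃ ⊗ₖ (1 : Matrix (Fin n₂) (Fin n₂) ℂ)) * unfoldT (cConjT T)) (k, i) j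
      = starRingEnd ℂ (T k j i) := by
  rw [Matrix.mul_apply]
  simp only [Fintype.sum_prod_type, kroneckerMap_apply, Pmat_apply', Matrix.one_apply,
    unfoldT, cConjT, Matrix.conjTranspose_apply, mul_ite, mul_one, mul_zero, ite_mul,
    zero_mul, one_mul]
  haveI : NeZero n₃ := ⟨k.pos.ne'⟩
  have hc : ∀ x : Fin n₃, (k = -x) ↔ (x = -k) := by
    intro x
    constructor <;> (intro h; rw [h, neg_neg])
  simp [hc, Finset.sum_ite_eq, Finset.sum_ite_eq']

lemma tConjT_apply {n₁ n₂ n₃ : ℕ} (A : Tensor Quat n₁ n₂ n₃)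
    (k : Fin n₃) (i : Fin n₂) (j : Fin n₁) :
    tConjT A k i j = c2q (starRingEnd ℂ (Td A (-k) j i))
      - c2q (starRingEnd ℂ (Tc A k j i)) * jH := by
  simp only [tConjT, foldT, Matrix.sub_apply, Matrix.map_apply, rsmul,
    unfoldT, cConjT, Matrix.conjTranspose_apply, PmulUnfold_apply]
  simp only [starRingEnd_apply]

lemma Td_tConjT {n₁ n₂ n₃ : ℕ} (A : Tensor Quat n₁ n₂ n₃)
    (k : Fin n₃) (i : Fin n₂) (j : Fin n₁) :
    Td (tConjT A) k i j = starRingEnd ℂ (Td A (-k) j i) := by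
  rw [Td, tConjT_apply, qd_aux]

lemma Tc_tConjT {n₁ n₂ n₃ : ℕ} (A : Tensor Quat n₁ n₂ n₃)
    (k : Fin n₃) (i : Fin n₂) (j : Fin n₁) :
    Tc (tConjT A) k i j = -(Tc A k j i) := by
  rw [Tc, tConjT_apply, qc_aux, Complex.conj_conj]

/-- `bcirc_z(A*) = (bcirc_z(A))*`. -/
theorem stmt2 {n n₃ : ℕ} (A : Tensor Quat n n n₃) :
    bcircz (tConjT A) = (bcircz A)ᴴ := by
  apply Matrix.ext
  rintro ⟨k, i⟩ ⟨l, j⟩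
  haveI : NeZero n₃ := ⟨k.pos.ne'⟩
  simp only [bcircz, Matrix.conjTranspose_apply, Matrix.add_apply, Matrix.map_apply,
    lsmul, bcirc, mulP_apply, star_add, star_c2q, star_jH_mul]
  rw [Td_tConjT, Tc_tConjT, neg_sub, c2q_neg, mul_neg, add_comm k l]


end
end

section
/- Let A = A_d + j·A_c ∈ ℍ^{n₁×n₂×n₃} be a third-order quaternion tensor and let Â be its mode-3 quaternion DFT. Then unfold(Â) = √n₃·(F_{n₃} ⊗ I_{n₁})·unfold(A) and unfold(A) = (1/√n₃)·(F_{n₃}* ⊗ I_{n₁})·unfold(Â), as identities of n₁n₃×n₂ quaternion matrices. -/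
open Matrix Kronecker

noncomputable section

section Helpers

lemma c2q_add (z w : ℂ) : c2q (z + w) = c2q z + c2q w := by
  ext <;> simp <;> simp [c2q]

lemma c2q_mul (z w : ℂ) : c2q (z * w) = c2q z * c2q w := by
  ext <;> simp <;> simp [c2q, Complex.mul_re, Complex.mul_im]

lemma c2q_jH (z : ℂ) : c2q z * jH = jH * c2q ((starRingEnd ℂ) z) := by
  ext <;> simp <;> simp [c2q, jH]

lemma q_decomp (q : Quat) : q = c2q (qd q) + jH * c2q (qc q) := by
  ext <;> simp <;> simp [c2q, jH, qd, qc]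

lemma smul_c2q (r : ℝ) (z : ℂ) : r • c2q z = c2q ((r : ℂ) * z) := by
  ext <;> simp <;> simp [c2q]

lemma c2q_sum {ι : Type*} (s : Finset ι) (f : ι → ℂ) :
    c2q (∑ t ∈ s, f t) = ∑ t ∈ s, c2q (f t) :=
  map_sum (AddMonoidHom.mk' c2q c2q_add) f s

lemma conj_Fmat {n : ℕ} (k t : Fin n) :
    (starRingEnd ℂ) (Fmat n k t) =
      (((Real.sqrt (n : ℝ)) : ℂ))⁻¹ *
        Complex.exp ((2 * (Real.pi : ℂ) * Complex.I * ((k : ℕ) : ℂ) * ((t : ℕ) : ℂ)) / (n : ℂ)) := by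
  rw [Fmat, _root_.map_mul, map_inv₀, Complex.conj_ofReal, ← Complex.exp_conj]
  congr 2
  simp [map_div₀, map_ofNat]

lemma sum_exp_eq {n : ℕ} (k s : Fin n) :
    ∑ t : Fin n,
      Complex.exp ((2 * (Real.pi : ℂ) * Complex.I * (((k : ℕ) : ℂ) - ((s : ℕ) : ℂ)) * ((t : ℕ) : ℂ)) / (n : ℂ))
      = if k = s then (n : ℂ) else 0 := by
  have hn : 0 < n := k.pos
  have hnC : (n : ℂ) ≠ 0 := Nat.cast_ne_zero.2 hn.ne'
  by_cases h : k = s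
  · simp [h]
  · simp only [if_neg h]
    set d : ℂ := ((k : ℕ) : ℂ) - ((s : ℕ) : ℂ) with hd
    set r : ℂ := Complex.exp ((2 * (Real.pi : ℂ) * Complex.I * d) / (n : ℂ)) with hr
    have hpow : ∀ t : ℕ, Complex.exp ((2 * (Real.pi : ℂ) * Complex.I * d * (t : ℂ)) / (n : ℂ)) = r ^ t := by
      intro t
      rw [hr, ← Complex.exp_nat_mul]
      congr 1
      ring
    have hrn : r ^ n = 1 := by
      rw [hr, ← Complex.exp_nat_mul]
      have : (n : ℂ) * ((2 * (Real.pi : ℂ) * Complex.I * d) / (n : ℂ))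
          = (((k : ℕ) : ℤ) - ((s : ℕ) : ℤ)) * (2 * (Real.pi : ℂ) * Complex.I) := by
        field_simp [hd]
        rw [hd]
        push_cast
        ring
      rw [this]
      exact_mod_cast Complex.exp_int_mul_two_pi_mul_I _
    have hr1 : r ≠ 1 := by
      intro hone
      obtain ⟨m, hm⟩ := Complex.exp_eq_one_iff.1 (hr ▸ hone)
      have h2 : (2 * (Real.pi : ℂ) * Complex.I) ≠ 0 := by
        simp [Real.pi_ne_zero, Complex.I_ne_zero, Complex.ofReal_ne_zero]
      have h3 : (2 * (Real.pi : ℂ) * Complex.I) * d = (2 * (Real.pi : ℂ) * Complex.I) * ((m : ℂ) * (n : ℂ)) := by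
        field_simp at hm
        linear_combination (2 * (Real.pi : ℂ) * Complex.I) * hm
      have h4 : d = (m : ℂ) * (n : ℂ) := mul_left_cancel₀ h2 h3
      have h5 : (((k : ℕ) : ℤ) - ((s : ℕ) : ℤ) : ℂ) = ((m * (n : ℤ) : ℤ) : ℂ) := by
        push_cast
        exact h4
      have h5' : ((k : ℕ) : ℤ) - ((s : ℕ) : ℤ) = m * (n : ℤ) := by exact_mod_cast h5
      have hdvd : ((n : ℕ) : ℤ) ∣ (((k : ℕ) : ℤ) - ((s : ℕ) : ℤ)) := ⟨m, by rw [h5']; ring⟩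
      have hk := k.isLt; have hs := s.isLt
      have hb1 : -((n : ℕ) : ℤ) < ((k : ℕ) : ℤ) - ((s : ℕ) : ℤ) := by omega
      have hb2 : ((k : ℕ) : ℤ) - ((s : ℕ) : ℤ) < ((n : ℕ) : ℤ) := by omega
      have h6 : ((k : ℕ) : ℤ) - ((s : ℕ) : ℤ) = 0 :=
        Int.eq_zero_of_abs_lt_dvd hdvd (abs_lt.2 ⟨hb1, hb2⟩)
      exact h (Fin.ext (by omega))
    calc ∑ t : Fin n,
        Complex.exp ((2 * (Real.pi : ℂ) * Complex.I * d * ((t : ℕ) : ℂ)) / (n : ℂ))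
        = ∑ t : Fin n, r ^ (t : ℕ) := Finset.sum_congr rfl fun t _ => hpow t
      _ = ∑ t ∈ Finset.range n, r ^ t := Fin.sum_univ_eq_sum_range _ n
      _ = (r ^ n - 1) / (r - 1) := geom_sum_eq hr1 n
      _ = 0 := by rw [hrn]; simp

lemma sqrt_inv_sq {n : ℕ} (h : 0 < n) :
    (((Real.sqrt (n : ℝ)) : ℂ))⁻¹ * (((Real.sqrt (n : ℝ)) : ℂ))⁻¹ = ((n : ℂ))⁻¹ := by
  rw [← mul_inv, ← Complex.ofReal_mul, Real.mul_self_sqrt (Nat.cast_nonneg n)]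
  norm_num

lemma orth {n : ℕ} (k s : Fin n) :
    ∑ t : Fin n, (starRingEnd ℂ) (Fmat n t k) * Fmat n t s = if k = s then 1 else 0 := by
  have hn : 0 < n := k.pos
  have hnC : (n : ℂ) ≠ 0 := Nat.cast_ne_zero.2 hn.ne'
  have hterm : ∀ t : Fin n, (starRingEnd ℂ) (Fmat n t k) * Fmat n t s =
      ((n : ℂ))⁻¹ *
        Complex.exp ((2 * (Real.pi : ℂ) * Complex.I * (((k : ℕ) : ℂ) - ((s : ℕ) : ℂ)) * ((t : ℕ) : ℂ)) / (n : ℂ)) := by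
    intro t
    rw [conj_Fmat, Fmat]
    rw [mul_mul_mul_comm, sqrt_inv_sq hn, ← Complex.exp_add]
    congr 1
    field_simp
    ring
  rw [Finset.sum_congr rfl fun t _ => hterm t, ← Finset.mul_sum, sum_exp_eq k s]
  by_cases h : k = s <;> simp [h, hnC, inv_mul_cancel₀]

lemma PF_eq_conjF {n : ℕ} (k t : Fin n) :
    (Pmat n * Fmat n) k t = (starRingEnd ℂ) (Fmat n k t) := by
  have hn : 0 < n := k.pos
  have hnC : (n : ℂ) ≠ 0 := Nat.cast_ne_zero.2 hn.ne'
  haveI : NeZero n := ⟨hn.ne'⟩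
  have hP : ∀ s : Fin n, Pmat n k s = if s = -k then 1 else 0 := by
    intro s
    have : (((k : ℕ) + (s : ℕ)) % n = 0) ↔ (s = -k) := by
      rw [eq_neg_iff_add_eq_zero, Fin.ext_iff, Fin.val_add, Fin.val_zero, Nat.add_comm]
    simp only [Pmat]
    simp [this]
  have hsum : (Pmat n * Fmat n) k t = Fmat n (-k) t := by
    rw [Matrix.mul_apply]
    rw [Finset.sum_congr rfl fun s _ => by rw [hP s]]
    simp
  rw [hsum, conj_Fmat, Fmat]
  congr 1
  obtain ⟨m, hm⟩ : (n : ℕ) ∣ (((-k : Fin n) : ℕ) + (k : ℕ)) := by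
    have : ((-k + k : Fin n) : ℕ) = 0 := by rw [neg_add_cancel, Fin.val_zero]
    rw [Fin.add_def] at this
    exact Nat.dvd_of_mod_eq_zero this
  have hval : (((-k : Fin n) : ℕ) : ℂ) = (n : ℂ) * (m : ℂ) - ((k : ℕ) : ℂ) := by
    have : (((-k : Fin n) : ℕ) : ℂ) + ((k : ℕ) : ℂ) = (n : ℂ) * (m : ℂ) := by
      exact_mod_cast congrArg (Nat.cast : ℕ → ℂ) hm
    linear_combination this
  rw [hval]
  have key : (-2 * (Real.pi : ℂ) * Complex.I * ((n : ℂ) * (m : ℂ) - ((k : ℕ) : ℂ)) * ((t : ℕ) : ℂ)) / (n : ℂ)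
      = (-((m : ℂ) * ((t : ℕ) : ℂ))) * (2 * (Real.pi : ℂ) * Complex.I)
        + (2 * (Real.pi : ℂ) * Complex.I * ((k : ℕ) : ℂ) * ((t : ℕ) : ℂ)) / (n : ℂ) := by
    field_simp
    ring
  have h1 : Complex.exp ((-((m : ℂ) * ((t : ℕ) : ℂ))) * (2 * (Real.pi : ℂ) * Complex.I)) = 1 := by
    have h2 := Complex.exp_int_mul_two_pi_mul_I (-(m * (t : ℕ) : ℤ))
    push_cast at h2
    exact h2
  rw [key, Complex.exp_add, h1, one_mul]

end Helpers

/-- `unfold(Â) = √n₃·(F_{n₃} ⊗ I_{n₁})·unfold(A)` and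
`unfold(A) = (1/√n₃)·(F_{n₃}* ⊗ I_{n₁})·unfold(Â)`. -/
theorem stmt13 {n₁ n₂ n₃ : ℕ} (A : Tensor Quat n₁ n₂ n₃) :
    unfoldT (hatT A) =
      Real.sqrt (n₃ : ℝ) •
        (((Fmat n₃).map c2q ⊗ₖ (1 : Matrix (Fin n₁) (Fin n₁) Quat)) * unfoldT A) ∧
    unfoldT A =
      (Real.sqrt (n₃ : ℝ))⁻¹ •
        ((((Fmat n₃)ᴴ).map c2q ⊗ₖ (1 : Matrix (Fin n₁) (Fin n₁) Quat)) *
          unfoldT (hatT A)) := by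
  constructor
  · refine Matrix.ext fun p j => ?_
    obtain ⟨k, i⟩ := p
    show hatT A k i j = _
    have expand : (Real.sqrt (n₃ : ℝ) •
        (((Fmat n₃).map c2q ⊗ₖ (1 : Matrix (Fin n₁) (Fin n₁) Quat)) * unfoldT A)) (k, i) j
        = Real.sqrt (n₃ : ℝ) • ∑ t : Fin n₃, c2q (Fmat n₃ k t) * A t i j := by
      simp [Matrix.smul_apply, Matrix.mul_apply, Matrix.kroneckerMap_apply, Matrix.map_apply,
        Fintype.sum_prod_type, unfoldT, Matrix.one_apply, mul_ite, mul_zero, mul_one,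
        ite_mul, zero_mul]
    rw [expand]
    have hterm : ∀ t : Fin n₃, c2q (Fmat n₃ k t) * A t i j
        = c2q (Fmat n₃ k t * Td A t i j) +
          jH * c2q ((Pmat n₃ * Fmat n₃) k t * Tc A t i j) := by
      intro t
      conv_lhs => rw [q_decomp (A t i j)]
      rw [mul_add, ← mul_assoc, c2q_jH, mul_assoc, ← c2q_mul, ← c2q_mul, PF_eq_conjF]
      rfl
    rw [Finset.sum_congr rfl fun t _ => hterm t, Finset.sum_add_distrib, smul_add, hatT]
    congr 1
    · rw [← c2q_sum, smul_c2q]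
    · rw [← Finset.mul_sum, ← c2q_sum, ← mul_smul_comm, smul_c2q]
  · refine Matrix.ext fun p j => ?_
    obtain ⟨k, i⟩ := p
    show A k i j = _
    have hn : 0 < n₃ := k.pos
    have hs : Real.sqrt (n₃ : ℝ) ≠ 0 := by
      have : (0 : ℝ) < n₃ := by exact_mod_cast hn
      positivity
    have expand : ((Real.sqrt (n₃ : ℝ))⁻¹ •
        ((((Fmat n₃)ᴴ).map c2q ⊗ₖ (1 : Matrix (Fin n₁) (Fin n₁) Quat)) * unfoldT (hatT A))) (k, i) j
        = (Real.sqrt (n₃ : ℝ))⁻¹ •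
            ∑ t : Fin n₃, c2q ((starRingEnd ℂ) (Fmat n₃ t k)) * hatT A t i j := by
      simp [Matrix.smul_apply, Matrix.mul_apply, Matrix.kroneckerMap_apply, Matrix.map_apply,
        Fintype.sum_prod_type, unfoldT, Matrix.one_apply, Matrix.conjTranspose_apply,
        mul_ite, mul_zero, mul_one, ite_mul, zero_mul]
    rw [expand]
    have hterm : ∀ t : Fin n₃,
        c2q ((starRingEnd ℂ) (Fmat n₃ t k)) * hatT A t i j
        = c2q ((starRingEnd ℂ) (Fmat n₃ t k) * (((Real.sqrt (n₃ : ℝ)) : ℂ) * ∑ s, Fmat n₃ t s * Td A s i j)) +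
          jH * c2q (Fmat n₃ t k * (((Real.sqrt (n₃ : ℝ)) : ℂ) * ∑ s, (Pmat n₃ * Fmat n₃) t s * Tc A s i j)) := by
      intro t
      rw [hatT, mul_add]
      congr 1
      · rw [← c2q_mul]
      · rw [← mul_assoc, c2q_jH, mul_assoc, ← c2q_mul, RingHomInvPair.comp_apply_eq]
    rw [Finset.sum_congr rfl fun t _ => hterm t, Finset.sum_add_distrib, smul_add]
    have claimA : ∑ t : Fin n₃, (starRingEnd ℂ) (Fmat n₃ t k) *
        (((Real.sqrt (n₃ : ℝ)) : ℂ) * ∑ s, Fmat n₃ t s * Td A s i j)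
        = ((Real.sqrt (n₃ : ℝ)) : ℂ) * Td A k i j := by
      have : ∑ t : Fin n₃, (starRingEnd ℂ) (Fmat n₃ t k) * ∑ s, Fmat n₃ t s * Td A s i j
          = Td A k i j := by
        calc ∑ t : Fin n₃, (starRingEnd ℂ) (Fmat n₃ t k) * ∑ s, Fmat n₃ t s * Td A s i j
            = ∑ t : Fin n₃, ∑ s, ((starRingEnd ℂ) (Fmat n₃ t k) * Fmat n₃ t s) * Td A s i j := by
              simp [Finset.mul_sum, mul_assoc]
          _ = ∑ s, (∑ t : Fin n₃, (starRingEnd ℂ) (Fmat n₃ t k) * Fmat n₃ t s) * Td A s i j := by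
              rw [Finset.sum_comm]
              simp [Finset.sum_mul]
          _ = Td A k i j := by
              simp [orth, ite_mul, one_mul, zero_mul]
      calc ∑ t : Fin n₃, (starRingEnd ℂ) (Fmat n₃ t k) *
            (((Real.sqrt (n₃ : ℝ)) : ℂ) * ∑ s, Fmat n₃ t s * Td A s i j)
          = ((Real.sqrt (n₃ : ℝ)) : ℂ) *
            ∑ t : Fin n₃, (starRingEnd ℂ) (Fmat n₃ t k) * ∑ s, Fmat n₃ t s * Td A s i j := by
            rw [Finset.mul_sum]
            exact Finset.sum_congr rfl fun t _ => by ring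
        _ = ((Real.sqrt (n₃ : ℝ)) : ℂ) * Td A k i j := by rw [this]
    have claimB : ∑ t : Fin n₃, Fmat n₃ t k *
        (((Real.sqrt (n₃ : ℝ)) : ℂ) * ∑ s, (Pmat n₃ * Fmat n₃) t s * Tc A s i j)
        = ((Real.sqrt (n₃ : ℝ)) : ℂ) * Tc A k i j := by
      have horth' : ∀ s : Fin n₃, ∑ t : Fin n₃, Fmat n₃ t k * (starRingEnd ℂ) (Fmat n₃ t s)
          = if k = s then 1 else 0 := by
        intro s
        have := congrArg (starRingEnd ℂ) (orth k s)
        rw [map_sum] at this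
        simpa [apply_ite, mul_comm] using this
      have : ∑ t : Fin n₃, Fmat n₃ t k * ∑ s, (Pmat n₃ * Fmat n₃) t s * Tc A s i j
          = Tc A k i j := by
        calc ∑ t : Fin n₃, Fmat n₃ t k * ∑ s, (Pmat n₃ * Fmat n₃) t s * Tc A s i j
            = ∑ t : Fin n₃, ∑ s, (Fmat n₃ t k * (starRingEnd ℂ) (Fmat n₃ t s)) * Tc A s i j := by
              refine Finset.sum_congr rfl fun t _ => ?_
              rw [Finset.mul_sum]
              exact Finset.sum_congr rfl fun s _ => by rw [PF_eq_conjF, mul_assoc]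
          _ = ∑ s, (∑ t : Fin n₃, Fmat n₃ t k * (starRingEnd ℂ) (Fmat n₃ t s)) * Tc A s i j := by
              rw [Finset.sum_comm]
              simp [Finset.sum_mul]
          _ = Tc A k i j := by
              simp [horth', ite_mul, one_mul, zero_mul]
      calc ∑ t : Fin n₃, Fmat n₃ t k *
            (((Real.sqrt (n₃ : ℝ)) : ℂ) * ∑ s, (Pmat n₃ * Fmat n₃) t s * Tc A s i j)
          = ((Real.sqrt (n₃ : ℝ)) : ℂ) *
            ∑ t : Fin n₃, Fmat n₃ t k * ∑ s, (Pmat n₃ * Fmat n₃) t s * Tc A s i j := by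
            rw [Finset.mul_sum]
            exact Finset.sum_congr rfl fun t _ => by ring
        _ = ((Real.sqrt (n₃ : ℝ)) : ℂ) * Tc A k i j := by rw [this]
    rw [← c2q_sum, claimA, ← Finset.mul_sum, ← c2q_sum, claimB, smul_c2q, ← mul_smul_comm, smul_c2q]
    rw [Complex.ofReal_inv, inv_mul_cancel_left₀ (by exact_mod_cast hs), inv_mul_cancel_left₀ (by exact_mod_cast hs)]
    exact q_decomp (A k i j)

end
end

section
/- Let A ∈ ℍ^{n₁×r×n₃}, B ∈ ℍ^{r×n₂×n₃}, and C ∈ ℍ^{n₁×n₂×n₃} be third-order quaternion tensors, with mode-3 quaternion DFTs Â, B̂, Ĉ. Then A *_Q B = C if and only if diag(Â)·diag(B̂) = diag(Ĉ). -/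
open Matrix Kronecker

noncomputable section

/-! ### Auxiliary lemmas -/

section Aux

lemma qd_add (p q : Quat) : qd (p + q) = qd p + qd q := by
  apply Complex.ext <;> simp [qd]

lemma qc_add (p q : Quat) : qc (p + q) = qc p + qc q := by
  apply Complex.ext <;> simp [qc] <;> ring

lemma qd_mul (p q : Quat) : qd (p * q) = qd p * qd q - (starRingEnd ℂ) (qc p) * qc q := by
  apply Complex.ext <;>
    simp [qd, qc, Quaternion.re_mul, Quaternion.imI_mul, Complex.mul_re, Complex.mul_im] <;> ring

lemma qc_mul (p q : Quat) : qc (p * q) = (starRingEnd ℂ) (qd p) * qc q + qc p * qd q := by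
  apply Complex.ext <;>
    simp [qd, qc, Quaternion.imJ_mul, Quaternion.imK_mul, Complex.mul_re, Complex.mul_im] <;> ring

lemma qd_dec (a b : ℂ) : qd (c2q a + jH * c2q b) = a := by
  apply Complex.ext <;> simp only [qd, Quaternion.re_add, Quaternion.imI_add, Quaternion.re_mul, Quaternion.imI_mul] <;> simp [c2q, jH]

lemma qc_dec (a b : ℂ) : qc (c2q a + jH * c2q b) = b := by
  apply Complex.ext <;> simp only [qc, Quaternion.imJ_add, Quaternion.imK_add, Quaternion.imJ_mul, Quaternion.imK_mul] <;> simp [c2q, jH]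

lemma quat_ext' {p q : Quat} (h1 : qd p = qd q) (h2 : qc p = qc q) : p = q := by
  have h1' := Complex.ext_iff.mp h1
  have h2' := Complex.ext_iff.mp h2
  simp only [qd, qc, neg_inj] at h1' h2'
  ext <;> simp [h1'.1, h1'.2, h2'.1, h2'.2]

lemma qd_sum {α : Type*} (s : Finset α) (f : α → Quat) :
    qd (∑ x ∈ s, f x) = ∑ x ∈ s, qd (f x) :=
  map_sum (AddMonoidHom.mk' qd qd_add) f s

lemma qc_sum {α : Type*} (s : Finset α) (f : α → Quat) :
    qc (∑ x ∈ s, f x) = ∑ x ∈ s, qc (f x) :=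
  map_sum (AddMonoidHom.mk' qc qc_add) f s

/-! ### The DFT kernel -/

def zet (n : ℕ) : ℂ := Complex.exp ((-2) * Real.pi * Complex.I / n)

lemma zet_ne_zero {n : ℕ} : zet n ≠ 0 := Complex.exp_ne_zero _

lemma zet_pow_n {n : ℕ} (hn : 0 < n) : zet n ^ n = 1 := by
  rw [zet, ← Complex.exp_nat_mul]
  have : (n : ℂ) ≠ 0 := Nat.cast_ne_zero.mpr hn.ne'
  rw [mul_div_assoc', mul_comm (n:ℂ), mul_div_assoc, div_self this, mul_one]
  rw [show ((-2 : ℂ) * Real.pi * Complex.I) = (-1 : ℤ) * (2 * Real.pi * Complex.I) by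
    push_cast; ring]
  rw [Complex.exp_int_mul_two_pi_mul_I]

lemma zet_prim {n : ℕ} (hn : 0 < n) : IsPrimitiveRoot (zet n) n := by
  have h := Complex.isPrimitiveRoot_exp n hn.ne'
  have : zet n = (Complex.exp (2 * Real.pi * Complex.I / n))⁻¹ := by
    rw [zet, ← Complex.exp_neg]; ring_nf
  rw [this]
  exact h.inv

lemma zpc {n : ℕ} (hn : 0 < n) {a b : ℤ} (h : a % n = b % n) : zet n ^ a = zet n ^ b := by
  have hd : (n : ℤ) ∣ a - b :=
    Int.dvd_of_emod_eq_zero (by rw [Int.sub_emod, h, sub_self, Int.zero_emod])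
  obtain ⟨c, hc⟩ := hd
  have : a = b + n * c := by omega
  rw [this, zpow_add₀ zet_ne_zero, _root_.zpow_mul, zpow_natCast, zet_pow_n hn, _root_.one_zpow, mul_one]

/-- The scaled DFT kernel `ζ^{kt}`. -/
def Gz (n : ℕ) (k t : Fin n) : ℂ := zet n ^ (((k : ℕ) : ℤ) * ((t : ℕ) : ℤ))

section ModFacts
variable {n : ℕ} [NeZero n]

lemma fin_add_int (x y : Fin n) :
    (((x + y : Fin n) : ℕ) : ℤ) % n = (((x:ℕ):ℤ) + ((y:ℕ):ℤ)) % n := by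
  have : ((x + y : Fin n) : ℕ) = ((x:ℕ) + (y:ℕ)) % n := by rw [Fin.add_def]
  rw [this]; push_cast
  exact Int.emod_emod_of_dvd _ dvd_rfl

lemma fin_neg_int (x : Fin n) :
    (((-x : Fin n) : ℕ) : ℤ) % n = (-((x:ℕ):ℤ)) % n := by
  have : ((-x : Fin n) : ℕ) = (n - (x:ℕ)) % n := by rw [Fin.neg_def]
  rw [this]
  have hx : (x : ℕ) ≤ n := (x.isLt).le
  push_cast [Nat.cast_sub hx]
  rw [Int.emod_emod_of_dvd _ dvd_rfl]
  conv_lhs => rw [show (n : ℤ) - (x:ℕ) = -((x:ℕ):ℤ) + n * 1 by ring]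
  rw [Int.add_mul_emod_self_left]

lemma fin_sub_int (x y : Fin n) :
    (((x - y : Fin n) : ℕ) : ℤ) % n = (((x:ℕ):ℤ) - ((y:ℕ):ℤ)) % n := by
  have h : x - y = x + (-y) := sub_eq_add_neg x y
  rw [h, fin_add_int]
  have hy := fin_neg_int (n := n) y
  rw [Int.add_emod, hy, ← Int.add_emod, ← sub_eq_add_neg]

lemma npos : 0 < n := Nat.pos_of_ne_zero (NeZero.ne n)

lemma Gz_mul_add (k t l : Fin n) : Gz n k t * Gz n k l = Gz n k (t + l) := by
  unfold Gz
  rw [← zpow_add₀ zet_ne_zero]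
  apply zpc npos
  have h : (((k:ℕ):ℤ) * (((t + l : Fin n):ℕ):ℤ)) % n
      = (((k:ℕ):ℤ) * (((t:ℕ):ℤ) + ((l:ℕ):ℤ))) % n :=
    Int.ModEq.mul_left _ (fin_add_int t l)
  rw [h, mul_add]

lemma Gz_mul_sub (k t l : Fin n) : Gz n k t * Gz n (-k) l = Gz n k (t - l) := by
  unfold Gz
  rw [← zpow_add₀ zet_ne_zero]
  apply zpc npos
  have h1 : ((((-k : Fin n):ℕ):ℤ) * ((l:ℕ):ℤ)) % n = ((-((k:ℕ):ℤ)) * ((l:ℕ):ℤ)) % n :=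
    Int.ModEq.mul_right _ (fin_neg_int k)
  have h2 : (((k:ℕ):ℤ) * (((t - l : Fin n):ℕ):ℤ)) % n
      = (((k:ℕ):ℤ) * (((t:ℕ):ℤ) - ((l:ℕ):ℤ))) % n :=
    Int.ModEq.mul_left _ (fin_sub_int t l)
  rw [Int.add_emod, h1, ← Int.add_emod, h2]
  congr 1; ring

lemma Gz_neg_add (k t l : Fin n) : Gz n (-k) t * Gz n (-k) l = Gz n (-k) (t + l) :=
  Gz_mul_add (-k) t l

lemma Gz_neg_sub (k t l : Fin n) : Gz n (-k) t * Gz n k l = Gz n (-k) (t - l) := by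
  have := Gz_mul_sub (-k) t l
  rwa [neg_neg] at this

omit [NeZero n] in
lemma zet_conj : (starRingEnd ℂ) (zet n) = (zet n)⁻¹ := by
  rw [zet, ← Complex.exp_conj, ← Complex.exp_neg]
  congr 1
  rw [map_div₀]
  rw [show ((-2 : ℂ) * Real.pi * Complex.I) = ((-2 * Real.pi : ℝ) : ℂ) * Complex.I by
    push_cast; ring]
  rw [_root_.map_mul, Complex.conj_ofReal, Complex.conj_I, Complex.conj_natCast]
  push_cast; ring

lemma Gz_conj (k t : Fin n) : (starRingEnd ℂ) (Gz n k t) = Gz n (-k) t := by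
  unfold Gz
  rw [map_zpow₀, zet_conj, _root_.inv_zpow, ← _root_.zpow_neg]
  apply zpc npos
  have h : ((((-k : Fin n):ℕ):ℤ) * ((t:ℕ):ℤ)) % n = ((-((k:ℕ):ℤ)) * ((t:ℕ):ℤ)) % n :=
    Int.ModEq.mul_right _ (fin_neg_int k)
  rw [h, neg_mul]

lemma Gz_sum (d : Fin n) : ∑ k : Fin n, Gz n k d = if d = 0 then (n : ℂ) else 0 := by
  by_cases hd : d = 0
  · subst hd
    simp [Gz]
  · rw [if_neg hd]
    have hform : ∀ k : Fin n, Gz n k d = (zet n ^ ((d:ℕ))) ^ ((k:ℕ)) := by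
      intro k
      rw [Gz, ← zpow_natCast (zet n ^ ((d:ℕ))), ← zpow_natCast (zet n) ((d:ℕ)), ← _root_.zpow_mul]
      congr 1; ring
    simp only [hform]
    rw [Fin.sum_univ_eq_sum_range (fun i => (zet n ^ (d:ℕ)) ^ i)]
    have hne1 : zet n ^ ((d:ℕ)) ≠ 1 := by
      apply (zet_prim npos).pow_ne_one_of_pos_of_lt
      · exact (fun h => hd (Fin.ext h))
      · exact d.isLt
    rw [geom_sum_eq hne1]
    rw [← pow_mul, mul_comm, pow_mul, zet_pow_n npos, one_pow]
    simp

lemma Gz_inj (x : Fin n → ℂ) (h : ∀ k, ∑ t, Gz n k t * x t = 0) : ∀ t, x t = 0 := by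
  intro t0
  have H : ∀ k : Fin n, ∑ t, Gz n (-k) (t0 - t) * x t = 0 := by
    intro k
    calc ∑ t, Gz n (-k) (t0 - t) * x t = Gz n (-k) t0 * ∑ t, Gz n k t * x t := by
          rw [Finset.mul_sum]
          exact Finset.sum_congr rfl fun t _ => by rw [← mul_assoc, Gz_neg_sub]
      _ = 0 := by rw [h k, mul_zero]
  have H2 : ∑ t : Fin n, (∑ k : Fin n, Gz n (-k) (t0 - t)) * x t = 0 := by
    calc ∑ t : Fin n, (∑ k : Fin n, Gz n (-k) (t0 - t)) * x t
        = ∑ k : Fin n, ∑ t, Gz n (-k) (t0 - t) * x t := by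
          rw [Finset.sum_comm]
          exact Finset.sum_congr rfl fun t _ => by rw [Finset.sum_mul]
      _ = 0 := by simp [H]
  have H3 : ∀ t : Fin n, ∑ k : Fin n, Gz n (-k) (t0 - t) = (if t0 - t = 0 then (n:ℂ) else 0) := by
    intro t
    rw [← Gz_sum]
    exact Fintype.sum_equiv (Equiv.neg (Fin n)) _ _ (fun k => by simp)
  simp only [H3, sub_eq_zero] at H2
  simp only [ite_mul, zero_mul, Finset.sum_ite_eq, Finset.mem_univ, if_true] at H2
  have hn : (n:ℂ) ≠ 0 := Nat.cast_ne_zero.mpr (NeZero.ne n)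
  exact (mul_eq_zero.mp H2).resolve_left hn

/-! ### Structural lemmas -/

lemma sqrtF (k t : Fin n) : ((Real.sqrt (n : ℝ) : ℝ) : ℂ) * Fmat n k t = Gz n k t := by
  have hs : ((Real.sqrt (n : ℝ) : ℝ) : ℂ) ≠ 0 := by
    simp only [ne_eq, Complex.ofReal_eq_zero]
    exact (Real.sqrt_pos.mpr (by exact_mod_cast (npos (n := n)))).ne'
  rw [Fmat, ← mul_assoc, mul_inv_cancel₀ hs, one_mul]
  rw [Gz, show (((k:ℕ):ℤ) * ((t:ℕ):ℤ)) = (((k:ℕ) * (t:ℕ) : ℕ) : ℤ) by push_cast; ring,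
    zpow_natCast, zet, ← Complex.exp_nat_mul]
  congr 1
  push_cast
  ring

lemma pmod_iff (k m : Fin n) : (((k:ℕ) + (m:ℕ)) % n = 0) ↔ m = -k := by
  rw [eq_neg_iff_add_eq_zero, Fin.ext_iff, Fin.val_add, Fin.val_zero, Nat.add_comm (m:ℕ)]

lemma PF (k t : Fin n) : (Pmat n * Fmat n) k t = Fmat n (-k) t := by
  rw [Matrix.mul_apply]
  have h : ∀ m : Fin n, Pmat n k m = if m = -k then 1 else 0 := by
    intro m
    rw [Pmat]
    by_cases hm : m = -k
    · rw [if_pos ((pmod_iff k m).mpr hm), if_pos hm]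
    · rw [if_neg (fun hc => hm ((pmod_iff k m).mp hc)), if_neg hm]
  simp only [h, ite_mul, one_mul, zero_mul, Finset.sum_ite_eq', Finset.mem_univ, if_true]

lemma hat_qd {n₁ n₂ : ℕ} (A : Tensor Quat n₁ n₂ n) (k : Fin n) (i : Fin n₁) (j : Fin n₂) :
    qd (hatT A k i j) = ∑ t, Gz n k t * Td A t i j := by
  rw [show hatT A k i j = c2q (((Real.sqrt (n : ℝ)) : ℂ) * ∑ t, Fmat n k t * Td A t i j) +
    jH * c2q (((Real.sqrt (n : ℝ)) : ℂ) * ∑ t, (Pmat n * Fmat n) k t * Tc A t i j) from rfl]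
  rw [qd_dec, Finset.mul_sum]
  exact Finset.sum_congr rfl fun t _ => by rw [← mul_assoc, sqrtF]

lemma hat_qc {n₁ n₂ : ℕ} (A : Tensor Quat n₁ n₂ n) (k : Fin n) (i : Fin n₁) (j : Fin n₂) :
    qc (hatT A k i j) = ∑ t, Gz n (-k) t * Tc A t i j := by
  rw [show hatT A k i j = c2q (((Real.sqrt (n : ℝ)) : ℂ) * ∑ t, Fmat n k t * Td A t i j) +
    jH * c2q (((Real.sqrt (n : ℝ)) : ℂ) * ∑ t, (Pmat n * Fmat n) k t * Tc A t i j) from rfl]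
  rw [qc_dec, Finset.mul_sum]
  exact Finset.sum_congr rfl fun t _ => by rw [← mul_assoc, PF, sqrtF]

lemma bcircz_apply_s14 {n₁ n₂ : ℕ} (A : Tensor Quat n₁ n₂ n) (m l : Fin n) (i : Fin n₁)
    (s : Fin n₂) :
    bcircz A (m, i) (l, s) = c2q (Td A (m - l) i s) + jH * c2q (Tc A (m + l) i s) := by
  simp only [bcircz, Matrix.add_apply, Matrix.map_apply, lsmul, bcirc]
  congr 2
  rw [Matrix.mul_apply, Fintype.sum_prod_type]
  have h : ∀ (w : Fin n) (t : Fin n₂),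
      (Pmat n ⊗ₖ (1 : Matrix (Fin n₂) (Fin n₂) ℂ)) (w, t) (l, s)
        = (if w = -l then 1 else 0) * (if t = s then 1 else 0) := by
    intro w t
    rw [Matrix.kroneckerMap_apply]
    have h1 : Pmat n w l = (if w = -l then 1 else 0) := by
      rw [Pmat]
      by_cases hw : w = -l
      · rw [if_pos (by rw [Nat.add_comm]; exact (pmod_iff l w).mpr hw), if_pos hw]
      · rw [if_neg (fun hc => hw ((pmod_iff l w).mp (by rwa [Nat.add_comm]))), if_neg hw]
    have h2 : (1 : Matrix (Fin n₂) (Fin n₂) ℂ) t s = if t = s then 1 else 0 := Matrix.one_apply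
    rw [h1, h2]
  simp only [h]
  congr 1
  simp [Finset.sum_ite_eq', bcirc, sub_neg_eq_add, mul_ite, mul_one, mul_zero]

lemma qtmul_td {n₁ r₀ n₂ : ℕ} (A : Tensor Quat n₁ r₀ n) (B : Tensor Quat r₀ n₂ n)
    (m : Fin n) (i : Fin n₁) (j : Fin n₂) :
    Td (qtmul A B) m i j = ∑ p : Fin n × Fin r₀,
      (Td A (m - p.1) i p.2 * Td B p.1 p.2 j
        - (starRingEnd ℂ) (Tc A (m + p.1) i p.2) * Tc B p.1 p.2 j) := by
  have h0 : qtmul A B m i j = ∑ p : Fin n × Fin r₀, bcircz A (m, i) p * B p.1 p.2 j := by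
    rw [show qtmul A B m i j = (bcircz A * unfoldT B) (m, i) j from rfl, Matrix.mul_apply]
    rfl
  rw [show Td (qtmul A B) m i j = qd (qtmul A B m i j) from rfl, h0, qd_sum]
  refine Finset.sum_congr rfl fun p _ => ?_
  obtain ⟨l, t⟩ := p
  rw [bcircz_apply_s14, qd_mul, qd_dec, qc_dec]
  rfl

lemma qtmul_tc {n₁ r₀ n₂ : ℕ} (A : Tensor Quat n₁ r₀ n) (B : Tensor Quat r₀ n₂ n)
    (m : Fin n) (i : Fin n₁) (j : Fin n₂) :
    Tc (qtmul A B) m i j = ∑ p : Fin n × Fin r₀,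
      ((starRingEnd ℂ) (Td A (m - p.1) i p.2) * Tc B p.1 p.2 j
        + Tc A (m + p.1) i p.2 * Td B p.1 p.2 j) := by
  have h0 : qtmul A B m i j = ∑ p : Fin n × Fin r₀, bcircz A (m, i) p * B p.1 p.2 j := by
    rw [show qtmul A B m i j = (bcircz A * unfoldT B) (m, i) j from rfl, Matrix.mul_apply]
    rfl
  rw [show Tc (qtmul A B) m i j = qc (qtmul A B m i j) from rfl, h0, qc_sum]
  refine Finset.sum_congr rfl fun p _ => ?_
  obtain ⟨l, t⟩ := p
  rw [bcircz_apply_s14, qc_mul, qd_dec, qc_dec]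
  rfl


lemma key_d {n₁ r₀ n₂ : ℕ} (A : Tensor Quat n₁ r₀ n) (B : Tensor Quat r₀ n₂ n)
    (k : Fin n) (i : Fin n₁) (j : Fin n₂) :
    qd (∑ s, hatT A k i s * hatT B k s j) = ∑ m, Gz n k m * Td (qtmul A B) m i j := by
  have lhs_eq : qd (∑ s, hatT A k i s * hatT B k s j)
      = ∑ s : Fin r₀, ∑ t : Fin n, ∑ l : Fin n,
          ((Gz n k t * Gz n k l) * (Td A t i s * Td B l s j)
            - (Gz n k t * Gz n (-k) l) * ((starRingEnd ℂ) (Tc A t i s) * Tc B l s j)) := by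
    rw [qd_sum]
    refine Finset.sum_congr rfl fun s _ => ?_
    rw [qd_mul, hat_qd, hat_qd, hat_qc, hat_qc,
      show (starRingEnd ℂ) (∑ t, Gz n (-k) t * Tc A t i s)
        = ∑ t, (starRingEnd ℂ) (Gz n (-k) t * Tc A t i s) from map_sum _ _ _,
      Finset.sum_mul_sum, Finset.sum_mul_sum, ← Finset.sum_sub_distrib]
    refine Finset.sum_congr rfl fun t _ => ?_
    rw [← Finset.sum_sub_distrib]
    refine Finset.sum_congr rfl fun l _ => ?_
    congr 1
    · ring
    · rw [_root_.map_mul, Gz_conj, neg_neg]; ring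
  have rhs_eq : ∑ m, Gz n k m * Td (qtmul A B) m i j
      = ∑ s : Fin r₀, ∑ t : Fin n, ∑ l : Fin n,
          ((Gz n k t * Gz n k l) * (Td A t i s * Td B l s j)
            - (Gz n k t * Gz n (-k) l) * ((starRingEnd ℂ) (Tc A t i s) * Tc B l s j)) := by
    calc ∑ m, Gz n k m * Td (qtmul A B) m i j
        = ∑ m : Fin n, ∑ p : Fin n × Fin r₀,
            (Gz n k m * (Td A (m - p.1) i p.2 * Td B p.1 p.2 j)
              - Gz n k m * ((starRingEnd ℂ) (Tc A (m + p.1) i p.2) * Tc B p.1 p.2 j)) := by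
          refine Finset.sum_congr rfl fun m _ => ?_
          rw [qtmul_td, Finset.mul_sum]
          exact Finset.sum_congr rfl fun p _ => by ring
      _ = ∑ p : Fin n × Fin r₀, ∑ m : Fin n,
            (Gz n k m * (Td A (m - p.1) i p.2 * Td B p.1 p.2 j)
              - Gz n k m * ((starRingEnd ℂ) (Tc A (m + p.1) i p.2) * Tc B p.1 p.2 j)) :=
          Finset.sum_comm
      _ = ∑ l : Fin n, ∑ s : Fin r₀, ∑ m : Fin n,
            (Gz n k m * (Td A (m - l) i s * Td B l s j)
              - Gz n k m * ((starRingEnd ℂ) (Tc A (m + l) i s) * Tc B l s j)) :=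
          Fintype.sum_prod_type _
      _ = ∑ s : Fin r₀, ∑ l : Fin n, ∑ m : Fin n,
            (Gz n k m * (Td A (m - l) i s * Td B l s j)
              - Gz n k m * ((starRingEnd ℂ) (Tc A (m + l) i s) * Tc B l s j)) :=
          Finset.sum_comm
      _ = ∑ s : Fin r₀, ∑ l : Fin n, ∑ t : Fin n,
            ((Gz n k t * Gz n k l) * (Td A t i s * Td B l s j)
              - (Gz n k t * Gz n (-k) l) * ((starRingEnd ℂ) (Tc A t i s) * Tc B l s j)) := by
          refine Finset.sum_congr rfl fun s _ => Finset.sum_congr rfl fun l _ => ?_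
          rw [Finset.sum_sub_distrib, Finset.sum_sub_distrib]
          congr 1
          · exact (Fintype.sum_equiv (Equiv.addRight l) _ _ fun t => by
              simp only [Equiv.coe_addRight, add_sub_cancel_right]
              rw [Gz_mul_add]).symm
          · exact (Fintype.sum_equiv (Equiv.subRight l) _ _ fun t => by
              simp only [Equiv.subRight_apply, sub_add_cancel]
              rw [Gz_mul_sub]).symm
      _ = ∑ s : Fin r₀, ∑ t : Fin n, ∑ l : Fin n,
            ((Gz n k t * Gz n k l) * (Td A t i s * Td B l s j)
              - (Gz n k t * Gz n (-k) l) * ((starRingEnd ℂ) (Tc A t i s) * Tc B l s j)) :=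
          Finset.sum_congr rfl fun s _ => Finset.sum_comm
  rw [lhs_eq, rhs_eq]

lemma key_c {n₁ r₀ n₂ : ℕ} (A : Tensor Quat n₁ r₀ n) (B : Tensor Quat r₀ n₂ n)
    (k : Fin n) (i : Fin n₁) (j : Fin n₂) :
    qc (∑ s, hatT A k i s * hatT B k s j) = ∑ m, Gz n (-k) m * Tc (qtmul A B) m i j := by
  have lhs_eq : qc (∑ s, hatT A k i s * hatT B k s j)
      = ∑ s : Fin r₀, ∑ t : Fin n, ∑ l : Fin n,
          ((Gz n (-k) t * Gz n (-k) l) * ((starRingEnd ℂ) (Td A t i s) * Tc B l s j)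
            + (Gz n (-k) t * Gz n k l) * (Tc A t i s * Td B l s j)) := by
    rw [qc_sum]
    refine Finset.sum_congr rfl fun s _ => ?_
    rw [qc_mul, hat_qd, hat_qd, hat_qc, hat_qc,
      show (starRingEnd ℂ) (∑ t, Gz n k t * Td A t i s)
        = ∑ t, (starRingEnd ℂ) (Gz n k t * Td A t i s) from map_sum _ _ _,
      Finset.sum_mul_sum, Finset.sum_mul_sum, ← Finset.sum_add_distrib]
    refine Finset.sum_congr rfl fun t _ => ?_
    rw [← Finset.sum_add_distrib]
    refine Finset.sum_congr rfl fun l _ => ?_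
    congr 1
    · rw [_root_.map_mul, Gz_conj]; ring
    · ring
  have rhs_eq : ∑ m, Gz n (-k) m * Tc (qtmul A B) m i j
      = ∑ s : Fin r₀, ∑ t : Fin n, ∑ l : Fin n,
          ((Gz n (-k) t * Gz n (-k) l) * ((starRingEnd ℂ) (Td A t i s) * Tc B l s j)
            + (Gz n (-k) t * Gz n k l) * (Tc A t i s * Td B l s j)) := by
    calc ∑ m, Gz n (-k) m * Tc (qtmul A B) m i j
        = ∑ m : Fin n, ∑ p : Fin n × Fin r₀,
            (Gz n (-k) m * ((starRingEnd ℂ) (Td A (m - p.1) i p.2) * Tc B p.1 p.2 j)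
              + Gz n (-k) m * (Tc A (m + p.1) i p.2 * Td B p.1 p.2 j)) := by
          refine Finset.sum_congr rfl fun m _ => ?_
          rw [qtmul_tc, Finset.mul_sum]
          exact Finset.sum_congr rfl fun p _ => by ring
      _ = ∑ p : Fin n × Fin r₀, ∑ m : Fin n,
            (Gz n (-k) m * ((starRingEnd ℂ) (Td A (m - p.1) i p.2) * Tc B p.1 p.2 j)
              + Gz n (-k) m * (Tc A (m + p.1) i p.2 * Td B p.1 p.2 j)) :=
          Finset.sum_comm
      _ = ∑ l : Fin n, ∑ s : Fin r₀, ∑ m : Fin n,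
            (Gz n (-k) m * ((starRingEnd ℂ) (Td A (m - l) i s) * Tc B l s j)
              + Gz n (-k) m * (Tc A (m + l) i s * Td B l s j)) :=
          Fintype.sum_prod_type _
      _ = ∑ s : Fin r₀, ∑ l : Fin n, ∑ m : Fin n,
            (Gz n (-k) m * ((starRingEnd ℂ) (Td A (m - l) i s) * Tc B l s j)
              + Gz n (-k) m * (Tc A (m + l) i s * Td B l s j)) :=
          Finset.sum_comm
      _ = ∑ s : Fin r₀, ∑ l : Fin n, ∑ t : Fin n,
            ((Gz n (-k) t * Gz n (-k) l) * ((starRingEnd ℂ) (Td A t i s) * Tc B l s j)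
              + (Gz n (-k) t * Gz n k l) * (Tc A t i s * Td B l s j)) := by
          refine Finset.sum_congr rfl fun s _ => Finset.sum_congr rfl fun l _ => ?_
          rw [Finset.sum_add_distrib, Finset.sum_add_distrib]
          congr 1
          · exact (Fintype.sum_equiv (Equiv.addRight l) _ _ fun t => by
              simp only [Equiv.coe_addRight, add_sub_cancel_right]
              rw [Gz_neg_add]).symm
          · exact (Fintype.sum_equiv (Equiv.subRight l) _ _ fun t => by
              simp only [Equiv.subRight_apply, sub_add_cancel]
              rw [Gz_neg_sub]).symm
      _ = ∑ s : Fin r₀, ∑ t : Fin n, ∑ l : Fin n,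
            ((Gz n (-k) t * Gz n (-k) l) * ((starRingEnd ℂ) (Td A t i s) * Tc B l s j)
              + (Gz n (-k) t * Gz n k l) * (Tc A t i s * Td B l s j)) :=
          Finset.sum_congr rfl fun s _ => Finset.sum_comm
  rw [lhs_eq, rhs_eq]

lemma blk_iff {n₁ r₀ n₂ : ℕ} (X : Tensor Quat n₁ r₀ n) (Y : Tensor Quat r₀ n₂ n)
    (Z : Tensor Quat n₁ n₂ n) :
    blkDiag X * blkDiag Y = blkDiag Z ↔ ∀ (k : Fin n) i j, ∑ s, X k i s * Y k s j = Z k i j := by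
  constructor
  · intro h k i j
    have h2 := congrFun (congrFun h (k, i)) (k, j)
    simp only [Matrix.mul_apply, blkDiag, Fintype.sum_prod_type] at h2
    simpa [ite_mul, mul_ite, Finset.sum_ite_eq, Finset.sum_ite_eq'] using h2
  · intro h
    apply Matrix.ext
    rintro ⟨k, i⟩ ⟨l, j⟩
    simp only [Matrix.mul_apply, blkDiag, Fintype.sum_prod_type]
    by_cases hkl : k = l
    · subst hkl
      simpa [ite_mul, mul_ite, Finset.sum_ite_eq, Finset.sum_ite_eq'] using h k i j
    · simp [hkl, ite_mul, mul_ite, Finset.sum_ite_eq, Finset.sum_ite_eq']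

end ModFacts

end Aux

/-- `A *_Q B = C ↔ diag(Â)·diag(B̂) = diag(Ĉ)`. -/
theorem stmt14 {n₁ r n₂ n₃ : ℕ} (A : Tensor Quat n₁ r n₃) (B : Tensor Quat r n₂ n₃)
    (C : Tensor Quat n₁ n₂ n₃) :
    qtmul A B = C ↔ blkDiag (hatT A) * blkDiag (hatT B) = blkDiag (hatT C) := by
  rcases Nat.eq_zero_or_pos n₃ with h0 | hpos
  · subst h0
    constructor
    · intro _
      apply Matrix.ext
      rintro ⟨k, i⟩ _
      exact k.elim0
    · intro _
      funext k
      exact k.elim0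
  · haveI : NeZero n₃ := ⟨hpos.ne'⟩
    rw [blk_iff]
    constructor
    · intro h k i j
      apply quat_ext'
      · rw [key_d, hat_qd, h]
      · rw [key_c, hat_qc, h]
    · intro h
      funext m
      apply Matrix.ext
      intro i j
      apply quat_ext'
      · have hz := Gz_inj (fun t => Td (qtmul A B) t i j - Td C t i j) (fun k => by
          have hk := congrArg qd (h k i j)
          rw [key_d, hat_qd] at hk
          simp only [mul_sub]
          rw [Finset.sum_sub_distrib, hk, sub_self]) m
        simpa [sub_eq_zero, Td] using hz
      · have hz := Gz_inj (fun t => Tc (qtmul A B) t i j - Tc C t i j) (fun k => by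
          have hk := congrArg qc (h (-k) i j)
          rw [key_c, hat_qc] at hk
          simp only [neg_neg] at hk
          simp only [mul_sub]
          rw [Finset.sum_sub_distrib, hk, sub_self]) m
        simpa [sub_eq_zero, Tc] using hz

end
end
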